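/- In the graph G on V with edge-vector adjacency, the graph distance between vertices x and y equals (max_i (x_i − y_i) − min_j (x_j − y_j))/(n+1). -/

import Mathlib

open Finset

/-- The vertex set of the 1-skeleton of the Ã_n Coxeter complex:
integer vectors summing to zero with all pairwise coordinate differences divisible by n+1. -/
def inV (n : ℕ) (x : Fin (n+1) → ℤ) : Prop :=
  (∑ i, x i = 0) ∧ ∀ i j, ((n : ℤ) + 1) ∣ x i - x j

/-- Maximum coordinate. -/
def maxC (n : ℕ) (x : Fin (n+1) → ℤ) : ℤ := univ.sup' univ_nonempty x

/-- Minimum coordinate. -/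
def minC (n : ℕ) (x : Fin (n+1) → ℤ) : ℤ := univ.inf' univ_nonempty x

/-- An edge vector: coordinates sum to 0, pairwise differences divisible by n+1,
and max minus min equals n+1. -/
def isEdge (n : ℕ) (e : Fin (n+1) → ℤ) : Prop :=
  inV n e ∧ maxC n e - minC n e = (n : ℤ) + 1

/-- Height of a vertex: (max − min)/(n+1). -/
def height (n : ℕ) (x : Fin (n+1) → ℤ) : ℤ :=
  (maxC n x - minC n x) / ((n : ℤ) + 1)

/-- The edge vector associated to a subset S: value n+1−|S| on S and −|S| off S. -/
def eVec (n : ℕ) (S : Finset (Fin (n+1))) : Fin (n+1) → ℤ :=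
  fun i => if i ∈ S then (n : ℤ) + 1 - S.card else -(S.card : ℤ)

lemma inV_zero (n : ℕ) : inV n 0 := ⟨by simp, fun i j => by simp⟩

lemma maxC_neg (n : ℕ) (x : Fin (n+1) → ℤ) : maxC n (-x) = - minC n x := by
  unfold maxC minC
  apply le_antisymm
  · apply Finset.sup'_le
    intro i hi
    have h1 : univ.inf' univ_nonempty x ≤ x i := Finset.inf'_le _ hi
    have h2 : (-x) i = -(x i) := rfl
    omega
  · obtain ⟨i, hi, h⟩ := Finset.exists_mem_eq_inf' (univ_nonempty) x
    rw [h]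
    have h1 : (-x) i ≤ univ.sup' univ_nonempty (-x) := Finset.le_sup' (-x) hi
    have h2 : (-x) i = -(x i) := rfl
    omega

lemma minC_neg (n : ℕ) (x : Fin (n+1) → ℤ) : minC n (-x) = - maxC n x := by
  have := maxC_neg n (-x)
  rw [neg_neg] at this
  unfold maxC minC at *
  omega

lemma isEdge_neg {n : ℕ} {e : Fin (n+1) → ℤ} (h : isEdge n e) : isEdge n (-e) := by
  obtain ⟨⟨h1, h2⟩, h3⟩ := h
  refine ⟨⟨by simp [h1], fun i j => by
    have h' : (-e) i - (-e) j = e j - e i := by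
      simp only [Pi.neg_apply]; ring
    rw [h']; exact h2 j i⟩, ?_⟩
  rw [maxC_neg, minC_neg]
  omega

/-- The graph G on V with edge-vector adjacency. -/
def G (n : ℕ) : SimpleGraph {x : Fin (n+1) → ℤ // inV n x} where
  Adj x y := isEdge n (y.1 - x.1)
  symm := by
    constructor
    intro x y h
    have := isEdge_neg h
    rwa [neg_sub] at this
  loopless := by
    constructor
    intro x h
    obtain ⟨-, h3⟩ := h
    rw [sub_self] at h3
    simp [maxC, minC] at h3
    omega

/-!
Write `spread v = max v - min v`. It is a seminorm on `ℤ^{n+1}` and every edge vector has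
spread `n + 1`, so a walk of length `ℓ` from `x` to `y` forces `spread (x - y) ≤ (n + 1) ℓ`.
Conversely, let `S` be the set of coordinates where `v = x - y ≠ 0` is maximal. All coordinates
of `v` are congruent modulo `n + 1`, so those outside `S` lie at least `n + 1` below the maximum;
hence subtracting the edge vector `eVec n S` lowers the spread of `v` by exactly `n + 1`, and
iterating gives a walk of length `spread (x - y) / (n + 1)`.
-/

section Spread

variable {n : ℕ}

lemma le_maxC (x : Fin (n+1) → ℤ) (i : Fin (n+1)) : x i ≤ maxC n x :=
  le_sup' x (mem_univ i)

lemma minC_le (x : Fin (n+1) → ℤ) (i : Fin (n+1)) : minC n x ≤ x i :=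
  inf'_le x (mem_univ i)

lemma exists_eq_maxC (x : Fin (n+1) → ℤ) : ∃ i, x i = maxC n x := by
  obtain ⟨i, -, h⟩ := exists_mem_eq_sup' univ_nonempty x
  exact ⟨i, h.symm⟩

lemma exists_eq_minC (x : Fin (n+1) → ℤ) : ∃ i, x i = minC n x := by
  obtain ⟨i, -, h⟩ := exists_mem_eq_inf' univ_nonempty x
  exact ⟨i, h.symm⟩

lemma maxC_eq_of_forall_le {x : Fin (n+1) → ℤ} {a : ℤ} (h : ∀ i, x i ≤ a) {i : Fin (n+1)}
    (hi : x i = a) : maxC n x = a :=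
  le_antisymm (sup'_le _ _ fun j _ => h j) (hi ▸ le_maxC x i)

lemma minC_eq_of_forall_ge {x : Fin (n+1) → ℤ} {a : ℤ} (h : ∀ i, a ≤ x i) {i : Fin (n+1)}
    (hi : x i = a) : minC n x = a :=
  le_antisymm (hi ▸ minC_le x i) (le_inf' _ _ fun j _ => h j)

def spread (n : ℕ) (x : Fin (n+1) → ℤ) : ℤ := maxC n x - minC n x

lemma spread_zero : spread n 0 = 0 := by simp [spread, maxC, minC]

lemma spread_nonneg (x : Fin (n+1) → ℤ) : 0 ≤ spread n x :=
  sub_nonneg.mpr ((minC_le x 0).trans (le_maxC x 0))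

lemma spread_neg (x : Fin (n+1) → ℤ) : spread n (-x) = spread n x := by
  rw [spread, spread, maxC_neg, minC_neg]
  ring

lemma spread_add_le (x y : Fin (n+1) → ℤ) : spread n (x + y) ≤ spread n x + spread n y := by
  obtain ⟨i, hi⟩ := exists_eq_maxC (x + y)
  obtain ⟨j, hj⟩ := exists_eq_minC (x + y)
  have := le_maxC x i
  have := le_maxC y i
  have := minC_le x j
  have := minC_le y j
  simp only [spread, ← hi, ← hj, Pi.add_apply]
  linarith

end Spread

section Vertices

variable {n : ℕ}

lemma inV_add {x y : Fin (n+1) → ℤ} (hx : inV n x) (hy : inV n y) : inV n (x + y) := by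
  refine ⟨by simp [sum_add_distrib, hx.1, hy.1], fun i j => ?_⟩
  rw [Pi.add_apply, Pi.add_apply, add_sub_add_comm]
  exact dvd_add (hx.2 i j) (hy.2 i j)

lemma inV_neg {x : Fin (n+1) → ℤ} (hx : inV n x) : inV n (-x) := by
  refine ⟨by simp [hx.1], fun i j => ?_⟩
  rw [Pi.neg_apply, Pi.neg_apply, neg_sub_neg]
  exact hx.2 j i

lemma inV_sub {x y : Fin (n+1) → ℤ} (hx : inV n x) (hy : inV n y) : inV n (x - y) :=
  sub_eq_add_neg x y ▸ inV_add hx (inV_neg hy)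

lemma dvd_spread {x : Fin (n+1) → ℤ} (hx : inV n x) : ((n : ℤ) + 1) ∣ spread n x := by
  obtain ⟨i, hi⟩ := exists_eq_maxC x
  obtain ⟨j, hj⟩ := exists_eq_minC x
  rw [spread, ← hi, ← hj]
  exact hx.2 i j

lemma eq_zero_of_spread_eq_zero {x : Fin (n+1) → ℤ} (hx : inV n x) (h : spread n x = 0) :
    x = 0 := by
  have hconst : ∀ i, x i = maxC n x := fun i => by
    have := le_maxC x i
    have := minC_le x i
    rw [spread] at h
    omega
  have hsum : ((n : ℤ) + 1) * maxC n x = 0 := by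
    simpa [hconst, sum_const, card_univ] using hx.1
  have hmax : maxC n x = 0 := (mul_eq_zero.mp hsum).resolve_left (by omega)
  funext i
  rw [hconst i, hmax, Pi.zero_apply]

lemma le_maxC_sub_of_ne {x : Fin (n+1) → ℤ} (hx : inV n x) {i : Fin (n+1)}
    (hi : x i ≠ maxC n x) : x i ≤ maxC n x - ((n : ℤ) + 1) := by
  obtain ⟨i₀, hi₀⟩ := exists_eq_maxC x
  have hlt : 0 < x i₀ - x i := by
    have := le_maxC x i
    omega
  have := Int.le_of_dvd hlt (hx.2 i₀ i)
  omega

end Vertices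

section EdgeVectors

variable {n : ℕ} {S : Finset (Fin (n+1))}

lemma eVec_of_mem {i : Fin (n+1)} (hi : i ∈ S) : eVec n S i = (n : ℤ) + 1 - #S := if_pos hi

lemma eVec_of_not_mem {i : Fin (n+1)} (hi : i ∉ S) : eVec n S i = -(#S : ℤ) := if_neg hi

lemma maxC_eVec {i : Fin (n+1)} (hi : i ∈ S) : maxC n (eVec n S) = (n : ℤ) + 1 - #S :=
  maxC_eq_of_forall_le (fun j => by unfold eVec; split_ifs <;> omega) (eVec_of_mem hi)

lemma minC_eVec {j : Fin (n+1)} (hj : j ∉ S) : minC n (eVec n S) = -(#S : ℤ) :=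
  minC_eq_of_forall_ge (fun i => by unfold eVec; split_ifs <;> omega) (eVec_of_not_mem hj)

lemma sum_eVec : ∑ i, eVec n S i = 0 := by
  have hcard : (#Sᶜ : ℤ) = (n : ℤ) + 1 - #S := by
    have := card_le_univ S
    rw [Fintype.card_fin] at this
    rw [card_compl, Fintype.card_fin]
    omega
  rw [← sum_add_sum_compl S, sum_congr rfl fun i hi => eVec_of_mem hi,
    sum_congr rfl fun i hi => eVec_of_not_mem (mem_compl.mp hi)]
  simp only [sum_const, nsmul_eq_mul, hcard]
  ring

lemma isEdge_eVec {i j : Fin (n+1)} (hi : i ∈ S) (hj : j ∉ S) : isEdge n (eVec n S) := by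
  refine ⟨⟨sum_eVec, fun a b => ?_⟩, by rw [maxC_eVec hi, minC_eVec hj]; ring⟩
  unfold eVec
  split_ifs
  · simp
  · exact ⟨1, by ring⟩
  · exact ⟨-1, by ring⟩
  · simp

lemma exists_isEdge_spread_sub_eq {x : Fin (n+1) → ℤ} (hx : inV n x) (hx0 : x ≠ 0) :
    ∃ e, isEdge n e ∧ spread n (x - e) = spread n x - ((n : ℤ) + 1) := by
  set M := maxC n x
  set m := minC n x
  let S : Finset (Fin (n+1)) := univ.filter (x · = M)
  have hS : ∀ {i}, i ∈ S ↔ x i = M := by simp [S]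
  obtain ⟨i₀, hi₀⟩ := exists_eq_maxC x
  obtain ⟨j₀, hj₀⟩ := exists_eq_minC x
  have hj₀S : j₀ ∉ S := fun h =>
    hx0 (eq_zero_of_spread_eq_zero hx (by rw [spread, ← hj₀, hS.mp h, sub_self]))
  have hgap : m ≤ M - ((n : ℤ) + 1) := by
    have := le_maxC_sub_of_ne hx (mt hS.mpr hj₀S)
    omega
  have hmax : maxC n (x - eVec n S) = M - ((n : ℤ) + 1) + #S := by
    refine maxC_eq_of_forall_le (fun i => ?_) (i := i₀) ?_
    · by_cases hi : i ∈ S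
      · simp only [Pi.sub_apply, eVec_of_mem hi, hS.mp hi]; omega
      · have := le_maxC_sub_of_ne hx (mt hS.mpr hi)
        simp only [Pi.sub_apply, eVec_of_not_mem hi]; omega
    · simp only [Pi.sub_apply, eVec_of_mem (hS.mpr hi₀), hi₀]; ring
  have hmin : minC n (x - eVec n S) = m + #S := by
    refine minC_eq_of_forall_ge (fun i => ?_) (i := j₀) ?_
    · by_cases hi : i ∈ S
      · simp only [Pi.sub_apply, eVec_of_mem hi, hS.mp hi]; omega
      · have := minC_le x i
        simp only [Pi.sub_apply, eVec_of_not_mem hi]; omega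
    · simp only [Pi.sub_apply, eVec_of_not_mem hj₀S, hj₀]; ring
  refine ⟨eVec n S, isEdge_eVec (hS.mpr hi₀) hj₀S, ?_⟩
  rw [spread, spread, hmax, hmin]
  ring

end EdgeVectors

section Distance

variable {n : ℕ}

lemma spread_sub_le_mul_length {x y : {x : Fin (n+1) → ℤ // inV n x}} (w : (G n).Walk x y) :
    spread n (x.1 - y.1) ≤ ((n : ℤ) + 1) * w.length := by
  induction w with
  | nil => simp [spread_zero]
  | @cons a b c hab w ih =>
    have hedge : spread n (a.1 - b.1) = (n : ℤ) + 1 := by rw [← neg_sub, spread_neg]; exact hab.2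
    have := spread_add_le (a.1 - b.1) (b.1 - c.1)
    rw [sub_add_sub_cancel, hedge] at this
    rw [SimpleGraph.Walk.length_cons]
    push_cast
    linarith

lemma exists_walk_length_eq_of_spread_sub_eq (k : ℕ) :
    ∀ x y : {x : Fin (n+1) → ℤ // inV n x}, spread n (x.1 - y.1) = ((n : ℤ) + 1) * k →
      ∃ w : (G n).Walk x y, w.length = k := by
  induction k with
  | zero =>
    intro x y hxy
    rw [Nat.cast_zero, mul_zero] at hxy
    have : x = y := Subtype.ext (sub_eq_zero.mp (eq_zero_of_spread_eq_zero (inV_sub x.2 y.2) hxy))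
    subst this
    exact ⟨.nil, rfl⟩
  | succ k ih =>
    intro x y hxy
    have hne : x.1 - y.1 ≠ 0 := by
      intro h
      have hpos : 0 < spread n (x.1 - y.1) := hxy ▸ by positivity
      rw [h, spread_zero] at hpos
      exact lt_irrefl 0 hpos
    obtain ⟨e, he, hspread⟩ := exists_isEdge_spread_sub_eq (inV_sub x.2 y.2) hne
    let x' : {x : Fin (n+1) → ℤ // inV n x} := ⟨x.1 - e, inV_sub x.2 he.1⟩
    have hadj : (G n).Adj x x' := by
      change isEdge n (x.1 - e - x.1)
      rw [sub_sub_cancel_left]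
      exact isEdge_neg he
    obtain ⟨w, hw⟩ := ih x' y (by
      rw [show x'.1 - y.1 = x.1 - y.1 - e from sub_right_comm _ _ _, hspread, hxy]
      push_cast
      ring)
    exact ⟨.cons hadj w, by rw [SimpleGraph.Walk.length_cons, hw]⟩

theorem mul_dist_eq_spread (x y : {x : Fin (n+1) → ℤ // inV n x}) :
    ((n : ℤ) + 1) * (G n).dist x y = spread n (x.1 - y.1) := by
  obtain ⟨c, hc⟩ := dvd_spread (inV_sub x.2 y.2)
  have hc0 : 0 ≤ c := nonneg_of_mul_nonneg_right (hc ▸ spread_nonneg _) (by positivity)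
  lift c to ℕ using hc0
  obtain ⟨w, hw⟩ := exists_walk_length_eq_of_spread_sub_eq c x y hc
  obtain ⟨p, hp⟩ := (SimpleGraph.Walk.reachable w).exists_walk_length_eq_dist
  have hle : (G n).dist x y ≤ c := hw ▸ SimpleGraph.dist_le w
  have hge : (c : ℤ) ≤ (G n).dist x y :=
    le_of_mul_le_mul_left (hc ▸ hp ▸ spread_sub_le_mul_length p) (by positivity)
  rw [hc, le_antisymm hle (by exact_mod_cast hge)]

end Distance

theorem stmt11_general (n : ℕ) (x y : {x : Fin (n+1) → ℤ // inV n x}) :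
    ((G n).dist x y : ℤ) =
      (maxC n (x.1 - y.1) - minC n (x.1 - y.1)) / ((n : ℤ) + 1) := by
  rw [← spread, ← mul_dist_eq_spread, Int.mul_ediv_cancel_left _ (by positivity)]

/-- the graph distance between x and y equals
(max(x−y) − min(x−y))/(n+1). -/
theorem stmt11 (n : ℕ) (hn : 1 ≤ n) (x y : {x : Fin (n+1) → ℤ // inV n x}) :
    ((G n).dist x y : ℤ) =
      (maxC n (x.1 - y.1) - minC n (x.1 - y.1)) / ((n : ℤ) + 1) :=
  stmt11_general n x y
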